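/- Improved first-derivative resolvent estimate with defect-decaying prefactor. Fix d, N_b ≥ 1 and 𝔪, c₃ > 0. There exists C > 0, depending only on d, N_b, 𝔪, c₃, such that the following holds. Let Λ be a countable set, y : Λ → ℝ^d 𝔪-separated, m ∈ Λ, and let γ, γ₁, c₁, c₂ > 0. Let R and B be bounded operators on ℓ²(Λ × {1,…,N_b}) whose matrix entries satisfy |R^{ab}_{ℓk}| ≤ c₁ e^{−γ r_{ℓk}} + c₂ e^{−γ(|y(ℓ)| + |y(k)|)} and |B^{ab}_{ℓk}| ≤ c₃ e^{−γ₁ (r_{ℓm} + r_{mk})} for all ℓ, k, a, b. Then, with η := min{γ, γ₁}, for all ℓ ∈ Λ and 1 ≤ a ≤ N_b: |(R B R)^{aa}_{ℓℓ}| ≤ C (1 + η^{−4d}) · (c₁² + c₂² e^{−(η/2)(|y(ℓ)| + |y(m)| − r_{ℓm})}) · e^{−(η/2) r_{ℓm}}. In particular, since |y(ℓ)| + |y(m)| ≥ r_{ℓm}, the prefactor converges to the unperturbed value C(1 + η^{−4d})c₁² exponentially fast as |y(ℓ)| + |y(m)| − r_{ℓm} → ∞. -/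

import Mathlib

/-! The bound on `B` factorises as `c₃ u_j u_k` with `u_j = e^{-γ₁ r_{jm}}`, so the diagonal
entry of `RBR` is at most `c₃ N_b² S²`, where `S = ∑_q e^{-γ₁ r_{qm}} (c₁ e^{-γ r_{ℓq}} +
c₂ e^{-γ(|y(ℓ)| + |y(q)|)})`. Half of the decay rate, put through the triangle inequality,
produces the factors `e^{-(η/2) r_{ℓm}}` and `e^{-(η/2)(|y(ℓ)| + |y(m)|)}`; the other half is
summed over the separated set, where a volume-packing count in unit shells bounds
`∑_q e^{-t |y(q) - z|}` by `O((1 + t⁻¹)^{d+1})` uniformly in `z`. Squaring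
`c₁ e^{-(η/2) r} + c₂ e^{-(η/2) L}` and using `L ≥ 0` gives the prefactor. -/

/-- Matrix entry `T^{ab}_{ℓk} = ⟨δ_{(ℓ,a)}, T δ_{(k,b)}⟩` of a bounded operator on `ℓ²(ι)`. -/
noncomputable def entry {ι : Type*} [DecidableEq ι]
    (T : lp (fun _ : ι => ℂ) 2 →L[ℂ] lp (fun _ : ι => ℂ) 2) (i j : ι) : ℂ :=
  inner ℂ (lp.single 2 i (1 : ℂ)) (T (lp.single 2 j (1 : ℂ)))

open Real Metric MeasureTheory Module
open scoped Nat ENNReal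

theorem inv_one_sub_exp_neg_le {t : ℝ} (ht : 0 < t) : (1 - exp (-t))⁻¹ ≤ 1 + t⁻¹ := by
  have h : exp (-t) ≤ (1 + t)⁻¹ := by
    rw [exp_neg]
    exact inv_anti₀ (by positivity) (by linarith [add_one_le_exp t])
  calc (1 - exp (-t))⁻¹ ≤ (1 - (1 + t)⁻¹)⁻¹ := by
        gcongr
        · rw [sub_pos]; exact inv_lt_one_of_one_lt₀ (by linarith)
    _ = 1 + t⁻¹ := by field_simp [ht.ne']; ring

theorem sum_pow_mul_exp_neg_le (n : ℕ) {t : ℝ} (ht : 0 < t) (s : Finset ℕ) :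
    ∑ k ∈ s, ((k : ℝ) + 1) ^ n * exp (-t * k) ≤ n ! * (1 + t⁻¹) ^ (n + 1) := by
  have hr : ‖exp (-t)‖ < 1 := by simpa [abs_of_pos (exp_pos _)] using ht
  have hterm : ∀ k : ℕ, ((k : ℝ) + 1) ^ n * exp (-t * k) ≤
      n ! * (((k + n).choose n : ℕ) * exp (-t) ^ k) := by
    intro k
    have := Nat.pow_le_choose (α := ℝ) n (k + n)
    rw [show k + n + 1 - n = k + 1 by omega, div_le_iff₀ (by positivity)] at this
    rw [← exp_nat_mul, mul_comm (k : ℝ), ← mul_assoc]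
    push_cast at this
    gcongr
    linarith
  calc ∑ k ∈ s, ((k : ℝ) + 1) ^ n * exp (-t * k)
      ≤ ∑ k ∈ s, n ! * (((k + n).choose n : ℕ) * exp (-t) ^ k) :=
        Finset.sum_le_sum fun k _ => hterm k
    _ ≤ n ! * (1 / (1 - exp (-t)) ^ (n + 1)) := sum_le_hasSum s (fun k _ => by positivity)
        ((hasSum_choose_mul_geometric_of_norm_lt_one n hr).mul_left _)
    _ ≤ n ! * (1 + t⁻¹) ^ (n + 1) := by
        rw [one_div, ← inv_pow]
        have : 0 < 1 - exp (-t) := by simpa using ht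
        gcongr
        exact inv_one_sub_exp_neg_le ht

noncomputable def separatedSumBound (n : ℕ) (𝔪 t : ℝ) : ℝ :=
  (1 + 2 / 𝔪) ^ n * n ! * (1 + t⁻¹) ^ (n + 1)

section Separated

variable {E : Type*} [NormedAddCommGroup E] [NormedSpace ℝ E] [FiniteDimensional ℝ E]
  [MeasurableSpace E] [BorelSpace E] {ι : Type*} {y : ι → E} {𝔪 : ℝ}

theorem card_le_of_separated (h𝔪 : 0 < 𝔪) (hy : ∀ i j, i ≠ j → 𝔪 ≤ dist (y i) (y j))
    (z : E) {ρ : ℝ} (hρ : 0 ≤ ρ) (F : Finset ι) (hF : ∀ i ∈ F, dist (y i) z < ρ) :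
    (F.card : ℝ) ≤ (2 * ρ / 𝔪 + 1) ^ finrank ℝ E := by
  set μ : Measure E := Measure.addHaar
  have hdisj : (F : Set ι).PairwiseDisjoint fun i => ball (y i) (𝔪 / 2) := fun i _ j _ hij =>
    ball_disjoint_ball (by linarith [hy i j hij])
  have hsub : ⋃ i ∈ F, ball (y i) (𝔪 / 2) ⊆ ball z (ρ + 𝔪 / 2) := by
    simp only [Set.iUnion_subset_iff]
    intro i hi x hx
    rw [mem_ball] at hx ⊢
    linarith [dist_triangle x (y i) z, hF i hi]
  -- disjoint balls of radius `𝔪 / 2` around the points all fit in a ball of radius `ρ + 𝔪 / 2`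
  have hvol : (F.card : ℝ≥0∞) * μ (ball 0 (𝔪 / 2)) ≤ μ (ball z (ρ + 𝔪 / 2)) := calc
    _ = ∑ i ∈ F, μ (ball (y i) (𝔪 / 2)) := by simp [Measure.addHaar_ball_center]
    _ = μ (⋃ i ∈ F, ball (y i) (𝔪 / 2)) :=
        (measure_biUnion_finset hdisj fun _ _ => measurableSet_ball).symm
    _ ≤ _ := measure_mono hsub
  rw [Measure.addHaar_ball_of_pos μ z (by positivity),
    Measure.addHaar_ball_of_pos μ 0 (half_pos h𝔪), ← mul_assoc,
    ENNReal.mul_le_mul_iff_left (measure_ball_pos μ 0 one_pos).ne' measure_ball_lt_top.ne,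
    ← ENNReal.ofReal_natCast, ← ENNReal.ofReal_mul (by positivity),
    ENNReal.ofReal_le_ofReal_iff (by positivity)] at hvol
  rw [show 2 * ρ / 𝔪 + 1 = (ρ + 𝔪 / 2) / (𝔪 / 2) by field_simp, div_pow,
    le_div_iff₀ (by positivity)]
  exact hvol

theorem sum_exp_neg_mul_dist_le (h𝔪 : 0 < 𝔪) (hy : ∀ i j, i ≠ j → 𝔪 ≤ dist (y i) (y j))
    (z : E) {t : ℝ} (ht : 0 < t) (F : Finset ι) :
    ∑ i ∈ F, exp (-t * dist (y i) z) ≤ separatedSumBound (finrank ℝ E) 𝔪 t := by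
  classical
  set n := finrank ℝ E
  set shell : ι → ℕ := fun i => ⌊dist (y i) z⌋₊
  have hshell (k : ℕ) : ∑ i ∈ F with shell i = k, exp (-t * dist (y i) z) ≤
      (1 + 2 / 𝔪) ^ n * (((k : ℝ) + 1) ^ n * exp (-t * k)) := by
    have hcard := card_le_of_separated h𝔪 hy z (ρ := k + 1) (by positivity)
      (F.filter (shell · = k)) fun i hi => by
        rw [← (Finset.mem_filter.1 hi).2]; exact Nat.lt_floor_add_one _
    calc ∑ i ∈ F with shell i = k, exp (-t * dist (y i) z)
        ≤ ∑ i ∈ F with shell i = k, exp (-t * k) := Finset.sum_le_sum fun i hi => by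
          rw [exp_le_exp, ← (Finset.mem_filter.1 hi).2]
          linarith [mul_le_mul_of_nonneg_left (Nat.floor_le (dist_nonneg : 0 ≤ dist (y i) z)) ht.le]
      _ ≤ (2 * (k + 1) / 𝔪 + 1) ^ n * exp (-t * k) := by
        rw [Finset.sum_const, nsmul_eq_mul]; gcongr
      _ ≤ ((1 + 2 / 𝔪) * (k + 1)) ^ n * exp (-t * k) := by
        gcongr
        rw [show (1 + 2 / 𝔪) * ((k : ℝ) + 1) = 2 * (k + 1) / 𝔪 + (k + 1) by ring]
        linarith [(k.cast_nonneg : (0 : ℝ) ≤ k)]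
      _ = (1 + 2 / 𝔪) ^ n * (((k : ℝ) + 1) ^ n * exp (-t * k)) := by rw [mul_pow, mul_assoc]
  rw [← Finset.sum_fiberwise_of_maps_to fun i hi => Finset.mem_image_of_mem shell hi]
  calc ∑ k ∈ F.image shell, ∑ i ∈ F with shell i = k, exp (-t * dist (y i) z)
      ≤ ∑ k ∈ F.image shell, (1 + 2 / 𝔪) ^ n * (((k : ℝ) + 1) ^ n * exp (-t * k)) :=
        Finset.sum_le_sum fun k _ => hshell k
    _ ≤ (1 + 2 / 𝔪) ^ n * (n ! * (1 + t⁻¹) ^ (n + 1)) := by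
        rw [← Finset.mul_sum]; gcongr; exact sum_pow_mul_exp_neg_le n ht _
    _ = separatedSumBound n 𝔪 t := by rw [separatedSumBound, mul_assoc]

end Separated

theorem exp_mul_decay_le {E : Type*} [NormedAddCommGroup E] {x z q : E} {ε γ γ₁ c₁ c₂ : ℝ}
    (hε : 0 ≤ ε) (hγ : 2 * ε ≤ γ) (hγ₁ : 2 * ε ≤ γ₁) (hc₁ : 0 ≤ c₁) (hc₂ : 0 ≤ c₂) :
    exp (-γ₁ * dist q z) * (c₁ * exp (-γ * dist x q) + c₂ * exp (-γ * (‖x‖ + ‖q‖))) ≤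
      c₁ * exp (-ε * dist x z) * exp (-ε * dist q x) +
        c₂ * exp (-ε * (‖x‖ + ‖z‖)) * exp (-ε * ‖q‖) := by
  have hγ₁' := mul_le_mul_of_nonneg_right hγ₁ (dist_nonneg : 0 ≤ dist q z)
  have hεd := mul_nonneg hε (dist_nonneg : 0 ≤ dist q z)
  have h₁ : exp (-γ₁ * dist q z) * exp (-γ * dist x q) ≤
      exp (-ε * dist x z) * exp (-ε * dist q x) := by
    rw [← exp_add, ← exp_add, exp_le_exp, dist_comm q x]
    linarith [mul_le_mul_of_nonneg_left (dist_triangle x q z) hε,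
      mul_le_mul_of_nonneg_right hγ (dist_nonneg : 0 ≤ dist x q)]
  have h₂ : exp (-γ₁ * dist q z) * exp (-γ * (‖x‖ + ‖q‖)) ≤
      exp (-ε * (‖x‖ + ‖z‖)) * exp (-ε * ‖q‖) := by
    rw [← exp_add, ← exp_add, exp_le_exp]
    have hz : ‖z‖ ≤ ‖q‖ + dist q z := by
      simpa only [dist_zero_right, dist_comm z q, add_comm] using dist_triangle z q 0
    linarith [mul_le_mul_of_nonneg_left hz hε,
      mul_le_mul_of_nonneg_right hγ (by positivity : 0 ≤ ‖x‖ + ‖q‖),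
      mul_nonneg hε (norm_nonneg x), mul_nonneg hε (norm_nonneg q)]
  calc exp (-γ₁ * dist q z) * (c₁ * exp (-γ * dist x q) + c₂ * exp (-γ * (‖x‖ + ‖q‖)))
      = c₁ * (exp (-γ₁ * dist q z) * exp (-γ * dist x q)) +
          c₂ * (exp (-γ₁ * dist q z) * exp (-γ * (‖x‖ + ‖q‖))) := by ring
    _ ≤ c₁ * (exp (-ε * dist x z) * exp (-ε * dist q x)) +
          c₂ * (exp (-ε * (‖x‖ + ‖z‖)) * exp (-ε * ‖q‖)) := by gcongr
    _ = _ := by ring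

theorem sum_exp_mul_decay_le {E : Type*} [NormedAddCommGroup E] [NormedSpace ℝ E]
    [FiniteDimensional ℝ E] [MeasurableSpace E] [BorelSpace E] {ι : Type*} {y : ι → E} {𝔪 : ℝ}
    (h𝔪 : 0 < 𝔪) (hy : ∀ i j, i ≠ j → 𝔪 ≤ dist (y i) (y j)) (x z : E) {ε γ γ₁ c₁ c₂ : ℝ}
    (hε : 0 < ε) (hγ : 2 * ε ≤ γ) (hγ₁ : 2 * ε ≤ γ₁) (hc₁ : 0 ≤ c₁) (hc₂ : 0 ≤ c₂)
    (F : Finset ι) :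
    ∑ q ∈ F, exp (-γ₁ * dist (y q) z) *
        (c₁ * exp (-γ * dist x (y q)) + c₂ * exp (-γ * (‖x‖ + ‖y q‖))) ≤
      separatedSumBound (finrank ℝ E) 𝔪 ε *
        (c₁ * exp (-ε * dist x z) + c₂ * exp (-ε * (‖x‖ + ‖z‖))) := by
  have hK := sum_exp_neg_mul_dist_le h𝔪 hy x hε F
  have hK₀ := sum_exp_neg_mul_dist_le h𝔪 hy 0 hε F
  simp only [dist_zero_right] at hK₀
  calc _ ≤ ∑ q ∈ F, (c₁ * exp (-ε * dist x z) * exp (-ε * dist (y q) x) +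
        c₂ * exp (-ε * (‖x‖ + ‖z‖)) * exp (-ε * ‖y q‖)) :=
        Finset.sum_le_sum fun q _ => exp_mul_decay_le hε.le hγ hγ₁ hc₁ hc₂
    _ = c₁ * exp (-ε * dist x z) * ∑ q ∈ F, exp (-ε * dist (y q) x) +
        c₂ * exp (-ε * (‖x‖ + ‖z‖)) * ∑ q ∈ F, exp (-ε * ‖y q‖) := by
        rw [Finset.sum_add_distrib, Finset.mul_sum, Finset.mul_sum]
    _ ≤ c₁ * exp (-ε * dist x z) * separatedSumBound (finrank ℝ E) 𝔪 ε +
        c₂ * exp (-ε * (‖x‖ + ‖z‖)) * separatedSumBound (finrank ℝ E) 𝔪 ε := by gcongr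
    _ = _ := by ring

section Entries

variable {ι : Type*} [DecidableEq ι]

theorem entry_eq_apply_single (T : lp (fun _ : ι => ℂ) 2 →L[ℂ] lp (fun _ : ι => ℂ) 2) (i j : ι) :
    entry T i j = T (lp.single 2 j 1) i := by
  simp [entry, lp.inner_single_left]

theorem apply_eq_tsum_entry (T : lp (fun _ : ι => ℂ) 2 →L[ℂ] lp (fun _ : ι => ℂ) 2)
    (f : lp (fun _ : ι => ℂ) 2) (i : ι) : T f i = ∑' k, entry T i k * f k := by
  have h := (lp.evalCLM ℂ (fun _ : ι => ℂ) 2 i ∘L T).hasSum (lp.hasSum_single (by simp) f)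
  refine h.tsum_eq.symm.trans (tsum_congr fun k => ?_)
  rw [entry_eq_apply_single, ← mul_one (f k), ← smul_eq_mul, lp.single_smul]
  simp [mul_comm, lp.evalCLM]

theorem norm_entry_comp_le_of_rank_one_bound
    {R₁ B R₂ : lp (fun _ : ι => ℂ) 2 →L[ℂ] lp (fun _ : ι => ℂ) 2} {u v g h : ι → ℝ}
    {c G H : ℝ} (i i' : ι) (hc : 0 ≤ c) (hu : ∀ j, 0 ≤ u j) (hv : ∀ k, 0 ≤ v k)
    (hB : ∀ j k, ‖entry B j k‖ ≤ c * u j * v k)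
    (hg : HasSum g G) (hR₁ : ∀ j, ‖entry R₁ i j‖ * u j ≤ g j)
    (hh : HasSum h H) (hR₂ : ∀ k, v k * ‖entry R₂ k i'‖ ≤ h k) :
    ‖entry (R₁ ∘L B ∘L R₂) i i'‖ ≤ c * G * H := by
  have hH : 0 ≤ H := hh.nonneg fun k => (mul_nonneg (hv k) (norm_nonneg _)).trans (hR₂ k)
  set f := R₂ (lp.single 2 i' 1)
  have hBf (j : ι) : ‖B f j‖ ≤ c * u j * H := by
    rw [apply_eq_tsum_entry]
    refine tsum_of_norm_bounded (hh.mul_left (c * u j)) fun k => ?_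
    rw [norm_mul, ← entry_eq_apply_single]
    calc ‖entry B j k‖ * ‖entry R₂ k i'‖ ≤ c * u j * v k * ‖entry R₂ k i'‖ := by
          gcongr; exact hB j k
      _ ≤ c * u j * h k := by rw [mul_assoc]; gcongr; exacts [mul_nonneg hc (hu j), hR₂ k]
  rw [entry_eq_apply_single, ContinuousLinearMap.comp_apply, ContinuousLinearMap.comp_apply,
    apply_eq_tsum_entry]
  calc _ ≤ c * H * G := tsum_of_norm_bounded (hg.mul_left (c * H)) fun j => ?_
    _ = c * G * H := by ring
  rw [norm_mul]
  calc ‖entry R₁ i j‖ * ‖B f j‖ ≤ ‖entry R₁ i j‖ * (c * u j * H) := by gcongr; exact hBf j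
    _ = c * H * (‖entry R₁ i j‖ * u j) := by ring
    _ ≤ c * H * g j := by gcongr; exact hR₁ j

end Entries

theorem HasSum.comp_fst_prod {ι κ : Type*} [Fintype κ] {F : ι → ℝ} {S : ℝ} (h : HasSum F S) :
    HasSum (fun p : ι × κ => F p.1) (Fintype.card κ * S) := by
  have hκ : HasSum (fun _ : κ => (1 : ℝ)) (Fintype.card κ) := by
    simpa using hasSum_fintype (fun _ : κ => (1 : ℝ))
  have hF : Summable fun x => ‖F x‖ := by simpa only [Real.norm_eq_abs] using h.summable.abs
  simpa only [mul_one, mul_comm S] using h.mul hκ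
    (summable_mul_of_summable_norm hF (Summable.of_finite (f := fun _ : κ => ‖(1 : ℝ)‖)))

theorem one_add_two_mul_pow_le {x : ℝ} (hx : 0 ≤ x) {k j : ℕ} (hkj : k ≤ j) :
    (1 + 2 * x) ^ k ≤ 3 ^ k * (1 + x ^ j) := by
  rcases le_total x 1 with h | h
  · calc (1 + 2 * x) ^ k ≤ 3 ^ k := pow_le_pow_left₀ (by positivity) (by linarith) k
      _ ≤ 3 ^ k * (1 + x ^ j) := le_mul_of_one_le_right (by positivity) (by simp [hx])
  · calc (1 + 2 * x) ^ k ≤ (3 * x) ^ k := pow_le_pow_left₀ (by positivity) (by linarith) k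
      _ ≤ 3 ^ k * x ^ j := by rw [mul_pow]; gcongr
      _ ≤ 3 ^ k * (1 + x ^ j) := by gcongr; linarith

theorem sq_separatedSumBound_half_le {n : ℕ} (hn : 1 ≤ n) (𝔪 : ℝ) {η : ℝ} (hη : 0 < η) :
    separatedSumBound n 𝔪 (η / 2) ^ 2 ≤
      3 ^ (2 * n + 2) * ((1 + 2 / 𝔪) ^ n * n !) ^ 2 * (1 + η⁻¹ ^ (4 * n)) := by
  rw [separatedSumBound, inv_div, div_eq_mul_inv]
  calc _ = ((1 + 2 / 𝔪) ^ n * n !) ^ 2 * (1 + 2 * η⁻¹) ^ (2 * n + 2) := by ring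
    _ ≤ ((1 + 2 / 𝔪) ^ n * n !) ^ 2 * (3 ^ (2 * n + 2) * (1 + η⁻¹ ^ (4 * n))) := by
        gcongr; exact one_add_two_mul_pow_le (by positivity) (by omega)
    _ = _ := by ring

theorem sq_add_exp_le {ε r L : ℝ} (hε : 0 ≤ ε) (hr : 0 ≤ r) (hL : 0 ≤ L) (c₁ c₂ : ℝ) :
    (c₁ * exp (-ε * r) + c₂ * exp (-ε * L)) ^ 2 ≤
      2 * (c₁ ^ 2 + c₂ ^ 2 * exp (-ε * (L - r))) * exp (-ε * r) := by
  have h₁ : exp (-ε * r) ^ 2 ≤ exp (-ε * r) := by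
    rw [← exp_nat_mul, exp_le_exp]; push_cast; linarith [mul_nonneg hε hr]
  have h₂ : exp (-ε * L) ^ 2 ≤ exp (-ε * (L - r)) * exp (-ε * r) := by
    rw [← exp_nat_mul, ← exp_add, exp_le_exp]; push_cast; linarith [mul_nonneg hε hL]
  nlinarith [sq_nonneg (c₁ * exp (-ε * r) - c₂ * exp (-ε * L)),
    mul_le_mul_of_nonneg_left h₁ (sq_nonneg c₁), mul_le_mul_of_nonneg_left h₂ (sq_nonneg c₂)]

/-- **improved first-derivative resolvent estimate with defect-decaying
prefactor.** With `|R^{ab}_{ℓk}| ≤ c₁e^{−γ r_{ℓk}} + c₂e^{−γ(|y(ℓ)|+|y(k)|)}` and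
`|B^{ab}_{ℓk}| ≤ c₃ e^{−γ₁(r_{ℓm}+r_{mk})}`, and `η = min{γ,γ₁}`:
`|(RBR)^{aa}_{ℓℓ}| ≤ C(1+η^{−4d})(c₁² + c₂² e^{−(η/2)(|y(ℓ)|+|y(m)|−r_{ℓm})}) e^{−(η/2)r_{ℓm}}`,
where `C` depends only on `d, N_b, 𝔪, c₃`. -/
theorem stmt19 (d Nb : ℕ) (hd : 1 ≤ d) (hNb : 1 ≤ Nb) (𝔪 c₃ : ℝ)
    (h𝔪 : 0 < 𝔪) (hc₃ : 0 < c₃) :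
    ∃ C : ℝ, 0 < C ∧
      ∀ (Λ : Type) [Countable Λ] [DecidableEq Λ]
        (y : Λ → EuclideanSpace ℝ (Fin d)),
        (∀ ℓ k : Λ, ℓ ≠ k → 𝔪 ≤ dist (y ℓ) (y k)) →
        ∀ (m : Λ) (γ γ₁ c₁ c₂ : ℝ), 0 < γ → 0 < γ₁ → 0 < c₁ → 0 < c₂ →
          ∀ R B : lp (fun _ : Λ × Fin Nb => ℂ) 2 →L[ℂ] lp (fun _ : Λ × Fin Nb => ℂ) 2,
            (∀ (ℓ k : Λ) (a b : Fin Nb),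
              ‖entry R (ℓ, a) (k, b)‖ ≤
                c₁ * Real.exp (-γ * dist (y ℓ) (y k)) +
                  c₂ * Real.exp (-γ * (‖y ℓ‖ + ‖y k‖))) →
            (∀ (ℓ k : Λ) (a b : Fin Nb),
              ‖entry B (ℓ, a) (k, b)‖ ≤
                c₃ * Real.exp (-γ₁ * (dist (y ℓ) (y m) + dist (y m) (y k)))) →
            ∀ (ℓ : Λ) (a : Fin Nb),
              ‖entry (R ∘L B ∘L R) (ℓ, a) (ℓ, a)‖ ≤
                C * (1 + (min γ γ₁)⁻¹ ^ (4 * d)) *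
                  (c₁ ^ 2 + c₂ ^ 2 *
                    Real.exp (-(min γ γ₁ / 2) * (‖y ℓ‖ + ‖y m‖ - dist (y ℓ) (y m)))) *
                  Real.exp (-(min γ γ₁ / 2) * dist (y ℓ) (y m)) := by
  refine ⟨2 * 3 ^ (2 * d + 2) * Nb ^ 2 * c₃ * ((1 + 2 / 𝔪) ^ d * d !) ^ 2, by positivity, ?_⟩
  intro Λ _ _ y hy m γ γ₁ c₁ c₂ hγ hγ₁ hc₁ hc₂ R B hR hB ℓ a
  set η := min γ γ₁
  have hη : 0 < η := lt_min hγ hγ₁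
  set G : Λ → ℝ := fun q => exp (-γ₁ * dist (y q) (y m)) *
    (c₁ * exp (-γ * dist (y ℓ) (y q)) + c₂ * exp (-γ * (‖y ℓ‖ + ‖y q‖)))
  have hGF := sum_exp_mul_decay_le (γ := γ) (γ₁ := γ₁) h𝔪 hy (y ℓ) (y m) (half_pos hη)
    (by linarith [min_le_left γ γ₁]) (by linarith [min_le_right γ γ₁]) hc₁.le hc₂.le
  have hG : HasSum G (∑' q, G q) := (summable_of_sum_le (fun q => by positivity) hGF).hasSum
  have hRrow (j : Λ × Fin Nb) : ‖entry R (ℓ, a) j‖ * exp (-γ₁ * dist (y j.1) (y m)) ≤ G j.1 := by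
    rw [mul_comm]; dsimp only [G]; gcongr; exact hR ℓ j.1 a j.2
  have hRcol (k : Λ × Fin Nb) : exp (-γ₁ * dist (y m) (y k.1)) * ‖entry R k (ℓ, a)‖ ≤ G k.1 := by
    rw [dist_comm (y m)]; dsimp only [G]; gcongr
    simpa only [dist_comm (y k.1), add_comm ‖y k.1‖] using hR k.1 ℓ k.2 a
  have hRBR := norm_entry_comp_le_of_rank_one_bound (ℓ, a) (ℓ, a) hc₃.le
    (fun _ => (exp_pos _).le) (fun _ => (exp_pos _).le)
    (fun j k => by simpa only [mul_add, exp_add, mul_assoc] using hB j.1 k.1 j.2 k.2)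
    hG.comp_fst_prod hRrow hG.comp_fst_prod hRcol
  have hGle := hG.summable.tsum_le_of_sum_le hGF
  rw [finrank_euclideanSpace_fin] at hGle
  calc _ ≤ c₃ * Nb ^ 2 * (∑' q, G q) ^ 2 := hRBR.trans_eq (by rw [Fintype.card_fin]; ring)
    _ ≤ c₃ * Nb ^ 2 * (separatedSumBound d 𝔪 (η / 2) * (c₁ * exp (-(η / 2) * dist (y ℓ) (y m)) +
          c₂ * exp (-(η / 2) * (‖y ℓ‖ + ‖y m‖)))) ^ 2 := by gcongr
    _ = c₃ * Nb ^ 2 * separatedSumBound d 𝔪 (η / 2) ^ 2 *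
          (c₁ * exp (-(η / 2) * dist (y ℓ) (y m)) + c₂ * exp (-(η / 2) * (‖y ℓ‖ + ‖y m‖))) ^ 2 := by
        ring
    _ ≤ c₃ * Nb ^ 2 * (3 ^ (2 * d + 2) * ((1 + 2 / 𝔪) ^ d * d !) ^ 2 * (1 + η⁻¹ ^ (4 * d))) *
          (2 * (c₁ ^ 2 + c₂ ^ 2 * exp (-(η / 2) * (‖y ℓ‖ + ‖y m‖ - dist (y ℓ) (y m)))) *
            exp (-(η / 2) * dist (y ℓ) (y m))) := by
        gcongr
        · exact sq_separatedSumBound_half_le hd 𝔪 hη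
        · exact sq_add_exp_le (by positivity) dist_nonneg (by positivity) c₁ c₂
    _ = _ := by ring
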